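/- arXiv:2309.06673 — 2 statements merged into one kernel-verified Lean document; each statement's English description precedes it below -/
import Mathlib

section
/- Let S be a nonempty finite set of positive integers, α : ℕ → ℝ with α(k) > 0 for every k ∈ S, and β : ℕ → ℝ. Define s : ℝ → ℝ by s(t) = Σ_{k ∈ S} α(k)·cos(2π k t + β(k)). If p ∈ ℝ satisfies s(t + p) = s(t) for all t ∈ ℝ, then k·p is an integer for every k ∈ S. -/
open Finset Real

lemma exp_two_pi_int (m : ℤ) : Complex.exp (2*(Real.pi:ℂ)*Complex.I*(m:ℂ)) = 1 := by
  convert Complex.exp_int_mul_two_pi_mul_I m using 2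
  ring

lemma key_int (m : ℤ) :
    (∫ t in (0:ℝ)..1, Complex.exp ((2*Real.pi*Complex.I*(m:ℂ)) * t)) = if m = 0 then 1 else 0 := by
  split_ifs with h
  · simp [h]
  · have hc : (2*(Real.pi:ℂ)*Complex.I*m : ℂ) ≠ 0 := by
      refine mul_ne_zero (mul_ne_zero (mul_ne_zero two_ne_zero ?_) Complex.I_ne_zero) ?_
      · exact_mod_cast Complex.ofReal_ne_zero.2 Real.pi_ne_zero
      · exact_mod_cast h
    rw [integral_exp_mul_complex hc]
    norm_num [exp_two_pi_int m]

lemma exp_pow (m : ℤ) (t : ℝ) :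
    Complex.exp ((2*Real.pi*Complex.I*(m:ℂ)) * t) = Complex.exp (2*Real.pi*Complex.I*t) ^ m := by
  rw [show ((2*Real.pi*Complex.I*(m:ℂ)) * t) = (m:ℂ) * (2*Real.pi*Complex.I*t) by ring,
    Complex.exp_int_mul]

lemma term_pt (j k : ℕ) (a b t : ℝ) :
    (a:ℂ) * (Real.cos (2*Real.pi*j*t + b) : ℂ) *
      Complex.exp ((2*Real.pi*Complex.I*(((-(k:ℤ)):ℤ):ℂ)) * t)
    = (a:ℂ)/2 * Complex.exp ((b:ℂ)*Complex.I) *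
        Complex.exp ((2*Real.pi*Complex.I*((((j:ℤ)-(k:ℤ)):ℤ):ℂ)) * t)
      + (a:ℂ)/2 * Complex.exp (-((b:ℂ)*Complex.I)) *
        Complex.exp ((2*Real.pi*Complex.I*(((-(j:ℤ)-(k:ℤ)):ℤ):ℂ)) * t) := by
  have hX : Complex.exp (2*Real.pi*Complex.I*t) ≠ 0 := Complex.exp_ne_zero _
  have hB : Complex.exp ((b:ℂ)*Complex.I) ≠ 0 := Complex.exp_ne_zero _
  rw [Complex.ofReal_cos,
    show Complex.cos ((2*Real.pi*j*t + b : ℝ):ℂ)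
      = (Complex.exp (((2*Real.pi*j*t + b : ℝ):ℂ)*Complex.I)
        + Complex.exp (-(((2*Real.pi*j*t + b : ℝ):ℂ))*Complex.I))/2 from rfl,
    exp_pow, exp_pow, exp_pow,
    show (((2*Real.pi*j*t + b : ℝ):ℂ))*Complex.I
      = (b:ℂ)*Complex.I + ((j:ℤ):ℂ)*(2*Real.pi*Complex.I*t) by push_cast; ring,
    show (-(((2*Real.pi*j*t + b : ℝ):ℂ)))*Complex.I
      = -((b:ℂ)*Complex.I) + ((-(j:ℤ):ℤ):ℂ)*(2*Real.pi*Complex.I*t) by push_cast; ring,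
    Complex.exp_add, Complex.exp_add, Complex.exp_int_mul, Complex.exp_int_mul]
  rw [Complex.exp_neg]
  simp only [zpow_sub₀ hX, zpow_neg, zpow_natCast]
  field_simp

lemma cexp_cont (c C : ℂ) : IntervalIntegrable (fun t:ℝ => c * Complex.exp (C * t))
    MeasureTheory.volume 0 1 := by
  apply Continuous.intervalIntegrable
  fun_prop

lemma term_int (j k : ℕ) (hj : 0 < j) (hk : 0 < k) (a b : ℝ) :
    (∫ t in (0:ℝ)..1, (a:ℂ) * (Real.cos (2*Real.pi*j*t + b) : ℂ) *
      Complex.exp ((2*Real.pi*Complex.I*(((-(k:ℤ)):ℤ):ℂ)) * t))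
    = if j = k then (a:ℂ)/2 * Complex.exp ((b:ℂ)*Complex.I) else 0 := by
  simp only [term_pt]
  rw [intervalIntegral.integral_add (cexp_cont _ _) (cexp_cont _ _),
    intervalIntegral.integral_const_mul, intervalIntegral.integral_const_mul,
    key_int, key_int]
  by_cases h : j = k
  · subst h
    have h1 : ((j:ℤ) - (j:ℤ)) = 0 := by omega
    have h2 : (-(j:ℤ) - (j:ℤ)) ≠ 0 := by omega
    simp [h1, h2]
  · have h1 : ((j:ℤ) - (k:ℤ)) ≠ 0 := by omega
    have h2 : (-(j:ℤ) - (k:ℤ)) ≠ 0 := by omega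
    simp [h, h1, h2]

/-- If `p` is a period of the trigonometric polynomial
`s(t) = Σ_{k ∈ S} α k · cos(2π k t + β k)` with strictly positive coefficients on a nonempty
finite set `S` of positive integers, then `k·p` is an integer for every `k ∈ S`. -/
theorem period_mul_harmonic_index_isInt
    (S : Finset ℕ) (hS : S.Nonempty) (hSpos : ∀ k ∈ S, 0 < k)
    (α β : ℕ → ℝ) (hα : ∀ k ∈ S, 0 < α k)
    (s : ℝ → ℝ)
    (hs : ∀ t : ℝ, s t = ∑ k ∈ S, α k * Real.cos (2 * Real.pi * (k : ℝ) * t + β k))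
    (p : ℝ) (hp : ∀ t : ℝ, s (t + p) = s t) :
    ∀ k ∈ S, ∃ m : ℤ, (k : ℝ) * p = (m : ℝ) := by
  intro k hk
  have hk0 : 0 < k := hSpos k hk
  set c : ℂ := 2*Real.pi*Complex.I*(((-(k:ℤ)):ℤ):ℂ) with hc
  set f : ℝ → ℂ := fun t => (s t : ℂ) * Complex.exp (c * t) with hf
  -- f is 1-periodic
  have hs1 : ∀ t, s (t + 1) = s t := by
    intro t
    rw [hs, hs]
    refine Finset.sum_congr rfl fun j hj => ?_
    congr 1
    rw [show 2 * Real.pi * (j:ℝ) * (t+1) + β j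
        = (2 * Real.pi * (j:ℝ) * t + β j) + (j:ℤ) * (2*Real.pi) by push_cast; ring]
    exact Real.cos_add_int_mul_two_pi _ _
  have hper : Function.Periodic f 1 := by
    intro t
    simp only [hf]
    rw [hs1]
    congr 1
    rw [show c * ((t:ℝ)+1 : ℝ) = c * t + 2*Real.pi*Complex.I*(((-(k:ℤ)):ℤ):ℂ) by
        rw [hc]; push_cast; ring,
      Complex.exp_add, exp_two_pi_int, mul_one]
  -- value of the integral
  have hJ : (∫ t in (0:ℝ)..1, f t) = (α k:ℂ)/2 * Complex.exp ((β k:ℂ)*Complex.I) := by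
    have hpt : ∀ t : ℝ, f t = ∑ j ∈ S,
        (α j:ℂ) * (Real.cos (2*Real.pi*j*t + β j) : ℂ) * Complex.exp (c * t) := by
      intro t
      simp only [hf, hs t]
      push_cast
      rw [Finset.sum_mul]
    rw [intervalIntegral.integral_congr (fun t _ => hpt t),
      intervalIntegral.integral_finset_sum]
    · rw [Finset.sum_congr rfl (fun j hj => term_int j k (hSpos j hj) hk0 (α j) (β j))]
      simp [Finset.sum_ite_eq', hk]
    · intro j hj
      apply Continuous.intervalIntegrable
      fun_prop
  have hJne : (∫ t in (0:ℝ)..1, f t) ≠ 0 := by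
    rw [hJ]
    exact mul_ne_zero (div_ne_zero (by exact_mod_cast (hα k hk).ne') two_ne_zero)
      (Complex.exp_ne_zero _)
  -- shift identity
  have hshift : (∫ t in (0:ℝ)..1, f (t+p)) = Complex.exp (c * p) * ∫ t in (0:ℝ)..1, f t := by
    have hpt : ∀ t : ℝ, f (t + p) = Complex.exp (c * p) * f t := by
      intro t
      simp only [hf]
      rw [hp t]
      push_cast
      rw [mul_add, Complex.exp_add]
      ring
    rw [intervalIntegral.integral_congr (fun t _ => hpt t),
      intervalIntegral.integral_const_mul]
  have hshift2 : (∫ t in (0:ℝ)..1, f (t+p)) = ∫ t in (0:ℝ)..1, f t := by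
    rw [intervalIntegral.integral_comp_add_right f p]
    have := hper.intervalIntegral_add_eq p 0
    rw [add_comm 1 p]
    simpa using this
  have hexp : Complex.exp (c * p) = 1 := by
    have h1 : Complex.exp (c * p) * (∫ t in (0:ℝ)..1, f t) = 1 * ∫ t in (0:ℝ)..1, f t := by
      rw [one_mul, ← hshift, hshift2]
    exact mul_right_cancel₀ hJne h1
  rw [Complex.exp_eq_one_iff] at hexp
  obtain ⟨n, hn⟩ := hexp
  refine ⟨-n, ?_⟩
  have h2 : (2*(Real.pi:ℂ)*Complex.I) ≠ 0 :=
    mul_ne_zero (mul_ne_zero two_ne_zero (Complex.ofReal_ne_zero.2 Real.pi_ne_zero))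
      Complex.I_ne_zero
  have hkp : ((k:ℂ)) * (p:ℂ) = ((-n : ℤ):ℂ) := by
    apply mul_left_cancel₀ h2
    rw [hc] at hn
    push_cast at hn ⊢
    linear_combination -hn
  exact_mod_cast hkp
end

section
/- Let S be a nonempty finite set of positive integers whose greatest common divisor equals 1, α : ℕ → ℝ with α(k) > 0 for every k ∈ S, and β : ℕ → ℝ. Define s : ℝ → ℝ by s(t) = Σ_{k ∈ S} α(k)·cos(2π k t + β(k)). Then s is periodic with period 1 (s(t + 1) = s(t) for all t), and every positive period p of s satisfies p ≥ 1; consequently 1 is the minimal positive period of s. In particular this holds even if 1 ∉ S, i.e., even when the fundamental component is absent. -/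
/-!
The translate of `s` by `p` is again a trigonometric polynomial on the harmonics `S`, with phases
`β k + 2π k p`. Comparing the `k`-th Fourier coefficients on `[0, 1]` of `s` and of its translate
gives `e^{2πikp} = 1` for every `k ∈ S`, as `α k ≠ 0`. So the order of `e^{2πip}` divides every
`k ∈ S`, hence divides `gcd S = 1`, and `p` is an integer.
-/

open Finset Real
open Complex (I)
open scoped Complex

lemma integral_cexp_two_pi_int_mul_I (n : ℤ) :
    ∫ t in (0 : ℝ)..1, cexp (2 * π * I * n * t) = if n = 0 then 1 else 0 := by
  split_ifs with hn
  · simp [hn]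
  · have hc : 2 * π * I * n ≠ 0 := by simp [pi_ne_zero, hn]
    rw [integral_exp_mul_complex hc, div_eq_zero_iff]
    left
    have : 2 * π * I * n * ((1 : ℝ) : ℂ) = n * (2 * π * I) := by push_cast; ring
    rw [this, Complex.exp_int_mul_two_pi_mul_I]
    simp

lemma ofReal_cos_mul_cexp_neg (k m : ℕ) (φ t : ℝ) :
    (cos (2 * π * k * t + φ) : ℂ) * cexp (-(2 * π * I * m * t)) =
      cexp (φ * I) / 2 * cexp (2 * π * I * ((k - m : ℤ) : ℂ) * t) +
        cexp (-(φ * I)) / 2 * cexp (2 * π * I * ((-k - m : ℤ) : ℂ) * t) := by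
  rw [Complex.ofReal_cos, Complex.cos, add_div, add_mul]
  congr 1
  · rw [div_mul_eq_mul_div, div_mul_eq_mul_div, ← Complex.exp_add, ← Complex.exp_add]
    push_cast; ring_nf
  · rw [div_mul_eq_mul_div, div_mul_eq_mul_div, ← Complex.exp_add, ← Complex.exp_add]
    push_cast; ring_nf

lemma integral_ofReal_cos_mul_cexp_neg (k : ℕ) {m : ℕ} (hm : m ≠ 0) (φ : ℝ) :
    ∫ t in (0 : ℝ)..1, (cos (2 * π * k * t + φ) : ℂ) * cexp (-(2 * π * I * m * t)) =
      if k = m then cexp (φ * I) / 2 else 0 := by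
  simp_rw [ofReal_cos_mul_cexp_neg]
  rw [intervalIntegral.integral_add (by apply Continuous.intervalIntegrable; fun_prop)
      (by apply Continuous.intervalIntegrable; fun_prop),
    intervalIntegral.integral_const_mul, intervalIntegral.integral_const_mul,
    integral_cexp_two_pi_int_mul_I, integral_cexp_two_pi_int_mul_I]
  have : (-k - m : ℤ) ≠ 0 := by omega
  simp [this, sub_eq_zero]

noncomputable def trigPoly (S : Finset ℕ) (α φ : ℕ → ℝ) (t : ℝ) : ℝ :=
  ∑ k ∈ S, α k * cos (2 * π * k * t + φ k)

lemma trigPoly_add (S : Finset ℕ) (α φ : ℕ → ℝ) (t p : ℝ) :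
    trigPoly S α φ (t + p) = trigPoly S α (fun k => φ k + 2 * π * k * p) t := by
  unfold trigPoly
  congr! 3
  ring

lemma trigPoly_add_one (S : Finset ℕ) (α φ : ℕ → ℝ) (t : ℝ) :
    trigPoly S α φ (t + 1) = trigPoly S α φ t := by
  unfold trigPoly
  congr! 2 with k
  rw [show 2 * π * k * (t + 1) + φ k = 2 * π * k * t + φ k + k * (2 * π) by ring,
    cos_add_nat_mul_two_pi]

lemma integral_trigPoly_mul_cexp_neg (S : Finset ℕ) (α φ : ℕ → ℝ) {m : ℕ} (hm : m ≠ 0) :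
    ∫ t in (0 : ℝ)..1, (trigPoly S α φ t : ℂ) * cexp (-(2 * π * I * m * t)) =
      if m ∈ S then α m * (cexp (φ m * I) / 2) else 0 := by
  simp_rw [trigPoly, Complex.ofReal_sum, Finset.sum_mul, Complex.ofReal_mul, mul_assoc (α _ : ℂ)]
  rw [intervalIntegral.integral_finsetSum
    (fun k _ => by apply Continuous.intervalIntegrable; fun_prop)]
  simp_rw [intervalIntegral.integral_const_mul, integral_ofReal_cos_mul_cexp_neg _ hm,
    mul_ite, mul_zero]
  exact Finset.sum_ite_eq' S m _

lemma cexp_two_pi_mul_I_pow_eq_one_of_periodic {S : Finset ℕ} {α : ℕ → ℝ} (φ : ℕ → ℝ) {p : ℝ}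
    (hper : ∀ t, trigPoly S α φ (t + p) = trigPoly S α φ t) {m : ℕ} (hmS : m ∈ S)
    (hα : α m ≠ 0) : cexp (2 * π * I * p) ^ m = 1 := by
  rcases eq_or_ne m 0 with rfl | hm
  · exact pow_zero _
  have hcoeff := congrArg (fun f : ℝ → ℝ => ∫ t in (0 : ℝ)..1,
    (f t : ℂ) * cexp (-(2 * π * I * m * t))) (funext hper)
  simp only [trigPoly_add, integral_trigPoly_mul_cexp_neg _ _ _ hm, if_pos hmS] at hcoeff
  have hshift : cexp ((φ m + 2 * π * m * p : ℝ) * I) =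
      cexp (φ m * I) * cexp (2 * π * I * p) ^ m := by
    rw [← Complex.exp_nat_mul, ← Complex.exp_add]
    push_cast; ring_nf
  rw [hshift] at hcoeff
  have hα' : (α m : ℂ) ≠ 0 := by exact_mod_cast hα
  have h := mul_left_cancel₀ hα' hcoeff
  rwa [div_left_inj' two_ne_zero, mul_eq_left₀ (Complex.exp_ne_zero _)] at h

lemma pow_finset_gcd_eq_one {M ι : Type*} [Monoid M] {x : M} {S : Finset ι} {f : ι → ℕ}
    (h : ∀ i ∈ S, x ^ f i = 1) : x ^ S.gcd f = 1 :=
  orderOf_dvd_iff_pow_eq_one.mp <| Finset.dvd_gcd fun i hi => orderOf_dvd_of_pow_eq_one (h i hi)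

lemma cexp_two_pi_mul_I_eq_one_iff {p : ℝ} : cexp (2 * π * I * p) = 1 ↔ ∃ n : ℤ, p = n := by
  rw [Complex.exp_eq_one_iff]
  refine exists_congr fun n => ?_
  rw [show (n : ℂ) * (2 * π * I) = 2 * π * I * (n : ℝ) by push_cast; ring,
    mul_right_inj' (by simp [pi_ne_zero]), Complex.ofReal_inj]

theorem minimal_period_one_of_gcd_one_general
    (S : Finset ℕ)
    (hgcd : S.gcd id = 1)
    (α β : ℕ → ℝ) (hα : ∀ k ∈ S, 0 < α k)
    (s : ℝ → ℝ)
    (hs : ∀ t : ℝ, s t = ∑ k ∈ S, α k * Real.cos (2 * Real.pi * (k : ℝ) * t + β k)) :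
    (∀ t : ℝ, s (t + 1) = s t) ∧
      (∀ p : ℝ, 0 < p → (∀ t : ℝ, s (t + p) = s t) → 1 ≤ p) := by
  obtain rfl : s = trigPoly S α β := funext hs
  refine ⟨trigPoly_add_one S α β, fun p hp hper => ?_⟩
  have hroot : cexp (2 * π * I * p) = 1 := by
    have h := pow_finset_gcd_eq_one (f := id) fun k hk =>
      cexp_two_pi_mul_I_pow_eq_one_of_periodic β hper hk (hα k hk).ne'
    rwa [hgcd, pow_one] at h
  obtain ⟨n, rfl⟩ := cexp_two_pi_mul_I_eq_one_iff.mp hroot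
  exact_mod_cast (Int.cast_pos.mp hp : 0 < n)

/-- If the indices of the present harmonics have greatest common divisor `1`, then the
trigonometric polynomial `s(t) = Σ_{k ∈ S} α k · cos(2π k t + β k)` (with strictly positive
coefficients on a nonempty finite set `S` of positive integers) is `1`-periodic and every
positive period is at least `1`; hence `1` is the minimal positive period, even if `1 ∉ S`
(i.e. even when the fundamental component is absent). -/
theorem minimal_period_one_of_gcd_one
    (S : Finset ℕ) (hS : S.Nonempty) (hSpos : ∀ k ∈ S, 0 < k)
    (hgcd : S.gcd id = 1)
    (α β : ℕ → ℝ) (hα : ∀ k ∈ S, 0 < α k)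
    (s : ℝ → ℝ)
    (hs : ∀ t : ℝ, s t = ∑ k ∈ S, α k * Real.cos (2 * Real.pi * (k : ℝ) * t + β k)) :
    (∀ t : ℝ, s (t + 1) = s t) ∧
      (∀ p : ℝ, 0 < p → (∀ t : ℝ, s (t + p) = s t) → 1 ≤ p) :=
  minimal_period_one_of_gcd_one_general S hgcd α β hα s hs
end
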